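/- Fix δ ≥ 0, a vertex v_{i+1} of τ, and an edge w_j w_{j+1} of σ. Suppose there exists a point x on the edge v_i v_{i+1} such that d_F(τ[v_1,x], σ[w_1,w_j]) ≤ δ. Then for every point y on w_j w_{j+1} with d(v_{i+1}, y) ≤ δ, we have d_F(τ[v_1, v_{i+1}], σ[w_1, y]) ≤ δ. -/
import Mathlib


open scoped RealInnerProductSpace

/-- Piecewise-linear (polygonal) curve with `n` edges and vertices `v 0, ..., v n`,
parameterized on `[0,1]`. -/
noncomputable def polyline {E : Type*} [NormedAddCommGroup E] [NormedSpace ℝ E]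
    (n : ℕ) (v : ℕ → E) (s : ℝ) : E :=
  let u : ℝ := s * n
  let i : ℕ := min (n - 1) (⌊u⌋.toNat)
  (1 - (u - i)) • v i + (u - i) • v (i + 1)

/-- A reparameterization of `[0,1]`: continuous, monotone, fixing the endpoints. -/
def IsReparam (φ : ℝ → ℝ) : Prop :=
  Continuous φ ∧ Monotone φ ∧ φ 0 = 0 ∧ φ 1 = 1

/-- The Fréchet distance between two curves `f g : ℝ → E` (regarded as parameterized
on `[0,1]`): the infimum of the bounds `δ` achieved by some pair of matched
reparameterizations. -/
noncomputable def frechetDist {E : Type*} [NormedAddCommGroup E] [NormedSpace ℝ E]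
    (f g : ℝ → E) : ℝ :=
  sInf {δ : ℝ | 0 ≤ δ ∧ ∃ φ ψ : ℝ → ℝ, IsReparam φ ∧ IsReparam ψ ∧
    ∀ t ∈ Set.Icc (0:ℝ) 1, dist (f (φ t)) (g (ψ t)) ≤ δ}

/-- Vertices of the subcurve `τ[v 0, x]` where `x` lies on the edge from `v i` to
`v (i+1)`: the vertices `v 0, ..., v i` followed by `x`. -/
def subVert {E : Type*} (v : ℕ → E) (i : ℕ) (x : E) : ℕ → E :=
  fun k => if k ≤ i then v k else x

section Helpers
variable {E : Type*} [NormedAddCommGroup E] [NormedSpace ℝ E]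

lemma polyline_def (n : ℕ) (v : ℕ → E) (s : ℝ) :
    polyline n v s = (1 - (s*n - (min (n-1) (⌊s*(n:ℝ)⌋.toNat) : ℕ))) • v (min (n-1) (⌊s*(n:ℝ)⌋.toNat))
      + (s*n - (min (n-1) (⌊s*(n:ℝ)⌋.toNat) : ℕ)) • v (min (n-1) (⌊s*(n:ℝ)⌋.toNat) + 1) := rfl

lemma polyline_piece (n k : ℕ) (v : ℕ → E) (hk : k + 1 ≤ n) (s : ℝ)
    (h1 : (k:ℝ) ≤ s * n) (h2 : s * n ≤ (k:ℝ) + 1) :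
    polyline n v s = (1 - (s * n - k)) • v k + (s * n - k) • v (k + 1) := by
  rcases lt_or_eq_of_le h2 with h2' | h2'
  · have hfl : ⌊s*(n:ℝ)⌋ = (k:ℤ) := by
      rw [Int.floor_eq_iff]
      constructor <;> push_cast <;> [exact h1; exact h2']
    have ht : (⌊s*(n:ℝ)⌋).toNat = k := by simp [hfl]
    have hm : min (n-1) ((⌊s*(n:ℝ)⌋).toNat) = k := by rw [ht]; omega
    rw [polyline_def, hm]
  · have hfl : ⌊s*(n:ℝ)⌋ = (k:ℤ) + 1 := by
      rw [h2', show ((k:ℝ)+1) = ((k+1:ℕ):ℝ) by push_cast; ring, Int.floor_natCast]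
      push_cast
      ring
    have ht : (⌊s*(n:ℝ)⌋).toNat = k + 1 := by simp [hfl]
    rcases Nat.lt_or_ge (k+1) n with hlt | hge
    · have hm : min (n-1) ((⌊s*(n:ℝ)⌋).toNat) = k + 1 := by rw [ht]; omega
      rw [polyline_def, hm]
      rw [h2']
      push_cast
      simp
    · have hn : n = k + 1 := by omega
      have hm : min (n-1) ((⌊s*(n:ℝ)⌋).toNat) = k := by rw [ht]; omega
      rw [polyline_def, hm]

lemma polyline_zero (v : ℕ → E) (s : ℝ) : polyline 0 v s = v 0 := by
  rw [polyline_def]; simp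

end Helpers


section Helpers2
variable {E : Type*} [NormedAddCommGroup E] [NormedSpace ℝ E]

lemma exists_piece (n : ℕ) (hn : 1 ≤ n) (s : ℝ) (hs : s ∈ Set.Icc (0:ℝ) 1) :
    ∃ k : ℕ, k + 1 ≤ n ∧ (k:ℝ) ≤ s * n ∧ s * n ≤ (k:ℝ) + 1 := by
  obtain ⟨hs0, hs1⟩ := hs
  have hu0 : (0:ℝ) ≤ s * n := by positivity
  have hun : s * n ≤ n := by
    calc s * n ≤ 1 * n := by apply mul_le_mul_of_nonneg_right hs1 (by positivity)
    _ = n := one_mul _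
  set m : ℕ := (⌊s*(n:ℝ)⌋).toNat with hm
  have hfl0 : (0:ℤ) ≤ ⌊s*(n:ℝ)⌋ := Int.floor_nonneg.mpr hu0
  have hmle : (m:ℝ) ≤ s * n := by
    rw [hm]; rw [show ((⌊s*(n:ℝ)⌋.toNat : ℕ):ℝ) = ((⌊s*(n:ℝ)⌋.toNat : ℤ):ℝ) by push_cast; ring]
    rw [Int.toNat_of_nonneg hfl0]; exact Int.floor_le _
  rcases Nat.lt_or_ge m n with hlt | hge
  · refine ⟨m, by omega, hmle, ?_⟩
    have := Int.lt_floor_add_one (s*(n:ℝ))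
    rw [hm]
    rw [show ((⌊s*(n:ℝ)⌋.toNat : ℕ):ℝ) = ((⌊s*(n:ℝ)⌋.toNat : ℤ):ℝ) by push_cast; ring,
      Int.toNat_of_nonneg hfl0]
    linarith
  · refine ⟨n - 1, by omega, ?_, ?_⟩
    · have : ((n:ℝ)) ≤ m := by exact_mod_cast Nat.cast_le.mpr hge
      have h2 : (m:ℝ) ≤ s * n := hmle
      have : ((n-1:ℕ):ℝ) ≤ (n:ℝ) - 1 := by
        rw [Nat.cast_sub hn]; push_cast; ring_nf; exact le_refl _
      nlinarith
    · have : ((n-1:ℕ):ℝ) + 1 = n := by rw [Nat.cast_sub hn]; push_cast; ring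
      rw [this]; exact hun
end Helpers2


section Helpers3
variable {E : Type*} [NormedAddCommGroup E] [NormedSpace ℝ E]

lemma match_tau (i : ℕ) (v : ℕ → E) (x : E) (c : ℝ) (hc0 : 0 ≤ c) (hc1 : c ≤ 1)
    (hxc : x = (1-c) • v i + c • v (i+1)) (s : ℝ) (hs : s ∈ Set.Icc (0:ℝ) 1) :
    polyline (i+1) (subVert v i x) s
      = polyline (i+1) v (min s (((i:ℝ) + c*(s*((i:ℝ)+1) - i))/((i:ℝ)+1))) := by
  have hN : ((i:ℝ)+1) ≠ 0 := by positivity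
  have hcast : ((i+1:ℕ):ℝ) = (i:ℝ)+1 := by push_cast; ring
  obtain ⟨k, hk, h1, h2⟩ := exists_piece (i+1) (by omega) s hs
  rw [hcast] at h1 h2
  set u : ℝ := s*((i:ℝ)+1) with hu
  rcases Nat.lt_or_ge k i with hki | hki
  · -- not the last edge
    have hmin : min s (((i:ℝ) + c*(u - i))/((i:ℝ)+1)) = s := by
      apply min_eq_left
      rw [le_div_iff₀ (by positivity)]
      have hui : u - (i:ℝ) ≤ 0 := by
        have : (k:ℝ) + 1 ≤ i := by exact_mod_cast Nat.cast_le.mpr hki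
        linarith
      nlinarith
    rw [hmin]
    rw [polyline_piece (i+1) k (subVert v i x) hk s (by rw [hcast]; exact h1) (by rw [hcast]; exact h2),
        polyline_piece (i+1) k v hk s (by rw [hcast]; exact h1) (by rw [hcast]; exact h2)]
    have e1 : subVert v i x k = v k := by simp [subVert]; intro h; omega
    have e2 : subVert v i x (k+1) = v (k+1) := by simp [subVert]; intro h; omega
    rw [e1, e2]
  · -- last edge : k = i
    have hki' : k = i := by omega
    subst hki'
    have ha0 : (0:ℝ) ≤ u - k := by linarith
    have ha1 : u - k ≤ 1 := by linarith
    set a : ℝ := u - k with hadef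
    have hmin : min s (((k:ℝ) + c*(u - k))/((k:ℝ)+1)) = ((k:ℝ) + c*a)/((k:ℝ)+1) := by
      apply min_eq_right
      rw [div_le_iff₀ (by positivity)]
      nlinarith
    rw [hmin]
    have harg : (((k:ℝ) + c*a)/((k:ℝ)+1)) * ((k+1:ℕ):ℝ) = (k:ℝ) + c*a := by
      rw [hcast]; field_simp
    rw [polyline_piece (k+1) k (subVert v k x) hk s (by rw [hcast]; exact h1) (by rw [hcast]; exact h2),
        polyline_piece (k+1) k v hk _ (by rw [harg]; nlinarith) (by rw [harg]; nlinarith)]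
    rw [harg]
    have e1 : subVert v k x k = v k := by simp [subVert]
    have e2 : subVert v k x (k+1) = x := by simp [subVert]
    rw [e1, e2, hcast, hxc]
    show (1 - a) • v k + a • ((1-c) • v k + c • v (k+1))
        = (1 - ((k:ℝ) + c*a - k)) • v k + ((k:ℝ) + c*a - k) • v (k+1)
    match_scalars <;> ring

lemma match_sigma (j : ℕ) (w : ℕ → E) (y : E) (s : ℝ) (hs : s ∈ Set.Icc (0:ℝ) 1) :
    polyline j w s = polyline (j+1) (subVert w j y) (s * j / ((j:ℝ)+1)) := by
  have hcast : ((j+1:ℕ):ℝ) = (j:ℝ)+1 := by push_cast; ring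
  rcases Nat.eq_zero_or_pos j with hj | hj
  · subst hj
    rw [polyline_zero]
    rw [polyline_piece 1 0 (subVert w 0 y) le_rfl _ (by push_cast; norm_num) (by push_cast; norm_num)]
    simp [subVert]
  · obtain ⟨k, hk, h1, h2⟩ := exists_piece j hj s hs
    have harg : (s * j / ((j:ℝ)+1)) * ((j+1:ℕ):ℝ) = s * j := by
      rw [hcast]; field_simp
    rw [polyline_piece j k w hk s h1 h2,
        polyline_piece (j+1) k (subVert w j y) (by omega) _ (by rw [harg]; exact h1) (by rw [harg]; exact h2)]
    rw [harg]
    have e1 : subVert w j y k = w k := by simp [subVert]; intro h; omega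
    have e2 : subVert w j y (k+1) = w (k+1) := by simp [subVert]; intro h; omega
    rw [e1, e2]

lemma seg_tau (i : ℕ) (v : ℕ → E) (x : E) (c : ℝ) (hc0 : 0 ≤ c) (hc1 : c ≤ 1)
    (hxc : x = (1-c) • v i + c • v (i+1)) (l : ℝ) (hl : l ∈ Set.Icc (0:ℝ) 1) :
    polyline (i+1) v (((i:ℝ) + c + (1-c)*l)/((i:ℝ)+1)) = (1-l) • x + l • v (i+1) := by
  obtain ⟨hl0, hl1⟩ := hl
  have hcast : ((i+1:ℕ):ℝ) = (i:ℝ)+1 := by push_cast; ring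
  have harg : (((i:ℝ) + c + (1-c)*l)/((i:ℝ)+1)) * ((i+1:ℕ):ℝ) = (i:ℝ) + (c + (1-c)*l) := by
    rw [hcast]; field_simp; ring
  rw [polyline_piece (i+1) i v le_rfl _ (by rw [harg]; nlinarith) (by rw [harg]; nlinarith)]
  rw [harg, hxc]
  match_scalars <;> ring

lemma seg_sigma (j : ℕ) (w : ℕ → E) (y : E) (l : ℝ) (hl : l ∈ Set.Icc (0:ℝ) 1) :
    polyline (j+1) (subVert w j y) (((j:ℝ) + l)/((j:ℝ)+1)) = (1-l) • w j + l • y := by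
  obtain ⟨hl0, hl1⟩ := hl
  have hcast : ((j+1:ℕ):ℝ) = (j:ℝ)+1 := by push_cast; ring
  have harg : (((j:ℝ) + l)/((j:ℝ)+1)) * ((j+1:ℕ):ℝ) = (j:ℝ) + l := by
    rw [hcast]; field_simp
  rw [polyline_piece (j+1) j (subVert w j y) le_rfl _ (by rw [harg]; linarith) (by rw [harg]; linarith)]
  rw [harg]
  have e1 : subVert w j y j = w j := by simp [subVert]
  have e2 : subVert w j y (j+1) = y := by simp [subVert]
  rw [e1, e2]
  congr 1 <;> [skip; skip] <;> congr 1 <;> ring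

end Helpers3


section Helpers4
variable {E : Type*} [NormedAddCommGroup E] [NormedSpace ℝ E]

lemma polyline_norm_le (n : ℕ) (v : ℕ → E) (s : ℝ) (hs : s ∈ Set.Icc (0:ℝ) 1) :
    ‖polyline n v s‖ ≤ ∑ k ∈ Finset.range (n+2), ‖v k‖ := by
  rcases Nat.eq_zero_or_pos n with hn | hn
  · subst hn
    rw [polyline_zero]
    exact Finset.single_le_sum (f := fun k => ‖v k‖) (fun k _ => norm_nonneg _)
      (Finset.mem_range.mpr (by omega))
  · obtain ⟨k, hk, h1, h2⟩ := exists_piece n hn s hs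
    rw [polyline_piece n k v hk s h1 h2]
    set a := s * n - (k:ℝ) with ha
    have ha0 : 0 ≤ a := by simp [ha]; linarith
    have ha1 : a ≤ 1 := by simp [ha]; linarith
    calc ‖(1-a) • v k + a • v (k+1)‖ ≤ ‖(1-a) • v k‖ + ‖a • v (k+1)‖ := norm_add_le _ _
    _ = (1-a) * ‖v k‖ + a * ‖v (k+1)‖ := by
        rw [norm_smul, norm_smul, Real.norm_eq_abs, Real.norm_eq_abs,
          abs_of_nonneg (by linarith), abs_of_nonneg ha0]
    _ ≤ ‖v k‖ + ‖v (k+1)‖ := by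
        have := norm_nonneg (v k); have := norm_nonneg (v (k+1)); nlinarith
    _ = ∑ m ∈ ({k, k+1} : Finset ℕ), ‖v m‖ := by
        rw [Finset.sum_pair (by omega)]
    _ ≤ ∑ m ∈ Finset.range (n+2), ‖v m‖ := by
        apply Finset.sum_le_sum_of_subset_of_nonneg
        · intro m hm; simp at hm; rcases hm with h | h <;> subst h <;>
            exact Finset.mem_range.mpr (by omega)
        · intro m _ _; exact norm_nonneg _

lemma dist_combo (a b c' d' : E) (l : ℝ) (hl0 : 0 ≤ l) (hl1 : l ≤ 1) :
    dist ((1-l) • a + l • b) ((1-l) • c' + l • d')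
      ≤ (1-l) * dist a c' + l * dist b d' := by
  rw [dist_eq_norm, dist_eq_norm, dist_eq_norm]
  have h : ((1-l) • a + l • b) - ((1-l) • c' + l • d') = (1-l) • (a-c') + l • (b-d') := by
    module
  rw [h]
  calc ‖(1-l) • (a-c') + l • (b-d')‖ ≤ ‖(1-l) • (a-c')‖ + ‖l • (b-d')‖ := norm_add_le _ _
  _ = (1-l) * ‖a-c'‖ + l * ‖b-d'‖ := by
      rw [norm_smul, norm_smul, Real.norm_eq_abs, Real.norm_eq_abs,
        abs_of_nonneg (by linarith), abs_of_nonneg hl0]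

lemma id_reparam : IsReparam (fun t : ℝ => t) :=
  ⟨continuous_id, monotone_id, rfl, rfl⟩

end Helpers4


section Helpers5

noncomputable def thetaMap (i : ℕ) (c : ℝ) (s : ℝ) : ℝ :=
  min s (((i:ℝ) + c*(s*((i:ℝ)+1) - i))/((i:ℝ)+1))

lemma theta_cont (i : ℕ) (c : ℝ) : Continuous (thetaMap i c) := by
  unfold thetaMap; fun_prop

lemma theta_mono (i : ℕ) (c : ℝ) (hc0 : 0 ≤ c) : Monotone (thetaMap i c) := by
  apply Monotone.min monotone_id
  intro p q hpq
  have hi : (0:ℝ) < (i:ℝ)+1 := by positivity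
  dsimp only
  gcongr

lemma theta_zero (i : ℕ) (c : ℝ) (hc0 : 0 ≤ c) (hc1 : c ≤ 1) : thetaMap i c 0 = 0 := by
  unfold thetaMap
  apply min_eq_left
  apply div_nonneg ?_ (by positivity)
  have : (0:ℝ) ≤ (i:ℝ) := Nat.cast_nonneg i
  nlinarith

lemma theta_one (i : ℕ) (c : ℝ) (hc0 : 0 ≤ c) (hc1 : c ≤ 1) :
    thetaMap i c 1 = ((i:ℝ)+c)/((i:ℝ)+1) := by
  unfold thetaMap
  rw [show ((i:ℝ) + c*(1*((i:ℝ)+1) - i)) = (i:ℝ) + c by ring]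
  apply min_eq_right
  rw [div_le_one (by positivity)]
  linarith

noncomputable def tauRep (i : ℕ) (c : ℝ) (φ : ℝ → ℝ) (t : ℝ) : ℝ :=
  if t ≤ 1/2 then thetaMap i c (φ (2*t)) else ((i:ℝ) + c + (1-c)*(2*t-1))/((i:ℝ)+1)

noncomputable def sigRep (j : ℕ) (ψ : ℝ → ℝ) (t : ℝ) : ℝ :=
  if t ≤ 1/2 then ψ (2*t) * (j:ℝ)/((j:ℝ)+1) else ((j:ℝ) + (2*t-1))/((j:ℝ)+1)

lemma tauRep_reparam (i : ℕ) (c : ℝ) (hc0 : 0 ≤ c) (hc1 : c ≤ 1) (φ : ℝ → ℝ)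
    (hφ : IsReparam φ) : IsReparam (tauRep i c φ) := by
  obtain ⟨hφc, hφm, hφ0, hφ1⟩ := hφ
  have hi : (0:ℝ) < (i:ℝ)+1 := by positivity
  refine ⟨?_, ?_, ?_, ?_⟩
  · apply Continuous.if_le
    · exact (theta_cont i c).comp (hφc.comp (by fun_prop))
    · fun_prop
    · exact continuous_id
    · exact continuous_const
    · intro t ht
      rw [ht]
      norm_num
      rw [hφ1, theta_one i c hc0 hc1]
  · intro p q hpq
    unfold tauRep
    by_cases hp : p ≤ 1/2 <;> by_cases hq : q ≤ 1/2
    · rw [if_pos hp, if_pos hq]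
      exact theta_mono i c hc0 (hφm (by linarith))
    · rw [if_pos hp, if_neg hq]
      calc thetaMap i c (φ (2*p)) ≤ thetaMap i c (φ 1) :=
            theta_mono i c hc0 (hφm (by linarith))
      _ = ((i:ℝ)+c)/((i:ℝ)+1) := by rw [hφ1, theta_one i c hc0 hc1]
      _ ≤ ((i:ℝ) + c + (1-c)*(2*q-1))/((i:ℝ)+1) := by
          push_neg at hq
          rw [div_le_div_iff_of_pos_right hi]
          nlinarith
    · exact absurd (hp) (by intro h; exact hp (le_trans hpq hq))
    · rw [if_neg hp, if_neg hq]
      gcongr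
  · unfold tauRep
    rw [if_pos (by norm_num), show (2:ℝ)*0 = 0 by ring, hφ0, theta_zero i c hc0 hc1]
  · unfold tauRep
    rw [if_neg (by norm_num)]
    field_simp
    ring

lemma sigRep_reparam (j : ℕ) (ψ : ℝ → ℝ) (hψ : IsReparam ψ) : IsReparam (sigRep j ψ) := by
  obtain ⟨hψc, hψm, hψ0, hψ1⟩ := hψ
  have hj : (0:ℝ) < (j:ℝ)+1 := by positivity
  refine ⟨?_, ?_, ?_, ?_⟩
  · apply Continuous.if_le
    · fun_prop
    · fun_prop
    · exact continuous_id
    · exact continuous_const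
    · intro t ht
      rw [ht]
      norm_num
      rw [hψ1]
      ring
  · intro p q hpq
    unfold sigRep
    by_cases hp : p ≤ 1/2 <;> by_cases hq : q ≤ 1/2
    · rw [if_pos hp, if_pos hq]
      have h2 := hψm (show 2*p ≤ 2*q by linarith)
      have hj' : (0:ℝ) ≤ (j:ℝ) := Nat.cast_nonneg j
      gcongr
    · rw [if_pos hp, if_neg hq]
      have h1 : ψ (2*p) ≤ 1 := by rw [← hψ1]; exact hψm (by linarith)
      calc ψ (2*p) * (j:ℝ)/((j:ℝ)+1) ≤ 1 * (j:ℝ)/((j:ℝ)+1) := by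
            have hj' : (0:ℝ) ≤ (j:ℝ) := Nat.cast_nonneg j
            gcongr
      _ = ((j:ℝ))/((j:ℝ)+1) := by ring_nf
      _ ≤ ((j:ℝ) + (2*q-1))/((j:ℝ)+1) := by gcongr; linarith
    · exact absurd hp (by intro h; exact hp (le_trans hpq hq))
    · rw [if_neg hp, if_neg hq]
      gcongr <;> linarith
  · unfold sigRep
    rw [if_pos (by norm_num), show (2:ℝ)*0 = 0 by ring, hψ0]
    simp
  · unfold sigRep
    rw [if_neg (by norm_num)]
    field_simp
    ring

end Helpers5


section Main

lemma frechet_nonempty {E : Type*} [NormedAddCommGroup E] [NormedSpace ℝ E]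
    (n m : ℕ) (v w : ℕ → E) :
    ({δ : ℝ | 0 ≤ δ ∧ ∃ φ ψ : ℝ → ℝ, IsReparam φ ∧ IsReparam ψ ∧
      ∀ t ∈ Set.Icc (0:ℝ) 1, dist (polyline n v (φ t)) (polyline m w (ψ t)) ≤ δ}).Nonempty := by
  refine ⟨(∑ k ∈ Finset.range (n+2), ‖v k‖) + ∑ k ∈ Finset.range (m+2), ‖w k‖,
    by positivity, (fun t => t), (fun t => t), id_reparam, id_reparam, fun t ht => ?_⟩
  calc dist (polyline n v t) (polyline m w t) ≤ ‖polyline n v t‖ + ‖polyline m w t‖ := by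
        rw [dist_eq_norm]; exact norm_sub_le _ _
  _ ≤ _ := add_le_add (polyline_norm_le n v t ht) (polyline_norm_le m w t ht)

/-- if some point `x` on the edge `v i v(i+1)` satisfies
`d_F(τ[v 0, x], σ[w 0, w j]) ≤ δ`, then for every point `y` on the edge
`w j w(j+1)` with `dist (v (i+1)) y ≤ δ` we have
`d_F(τ[v 0, v (i+1)], σ[w 0, y]) ≤ δ`. -/
theorem reach_propagate {d : ℕ} (v w : ℕ → EuclideanSpace ℝ (Fin d)) (i j : ℕ)
    (δ : ℝ) (hδ : 0 ≤ δ) (x : EuclideanSpace ℝ (Fin d))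
    (hx : x ∈ segment ℝ (v i) (v (i+1)))
    (hreach : frechetDist (polyline (i+1) (subVert v i x)) (polyline j w) ≤ δ) :
    ∀ y ∈ segment ℝ (w j) (w (j+1)), dist (v (i+1)) y ≤ δ →
      frechetDist (polyline (i+1) v) (polyline (j+1) (subVert w j y)) ≤ δ := by
  intro y hy hdy
  obtain ⟨a, c, ha0, hc0, habc, hxc⟩ := hx
  have hc1 : c ≤ 1 := by linarith
  have hxc' : x = (1-c) • v i + c • v (i+1) := by
    rw [← hxc, show (1:ℝ)-c = a by linarith]
  refine le_of_forall_pos_le_add fun ε hε => ?_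
  unfold frechetDist at hreach ⊢
  have hne := frechet_nonempty (i+1) j (subVert v i x) w
  obtain ⟨δ', hmem, hδ'lt⟩ := exists_lt_of_csInf_lt hne (lt_of_le_of_lt hreach (show δ < δ + ε by linarith))
  obtain ⟨hδ'0, φ, ψ, hφ, hψ, hbd⟩ := hmem
  -- endpoint distance
  have hf1 : polyline (i+1) (subVert v i x) 1 = x := by
    rw [match_tau i v x c hc0 hc1 hxc' 1 (by norm_num)]
    rw [show (min (1:ℝ) (((i:ℝ) + c*(1*((i:ℝ)+1) - i))/((i:ℝ)+1)))
        = thetaMap i c 1 by unfold thetaMap; norm_num]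
    rw [theta_one i c hc0 hc1,
      show ((i:ℝ)+c)/((i:ℝ)+1) = ((i:ℝ) + c + (1-c)*0)/((i:ℝ)+1) by ring_nf]
    rw [seg_tau i v x c hc0 hc1 hxc' 0 (by norm_num)]
    simp
  have hg1 : polyline j w 1 = w j := by
    rw [match_sigma j w y 1 (by norm_num),
      show (1:ℝ) * j / ((j:ℝ)+1) = ((j:ℝ) + 0)/((j:ℝ)+1) by ring,
      seg_sigma j w y 0 (by norm_num)]
    simp
  have hdxw : dist x (w j) ≤ δ' := by
    have h1 := hbd 1 (by norm_num)
    rwa [hφ.2.2.2, hψ.2.2.2, hf1, hg1] at h1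
  -- membership of δ + ε
  apply csInf_le ⟨0, fun z hz => hz.1⟩
  refine ⟨by linarith, tauRep i c φ, sigRep j ψ,
    tauRep_reparam i c hc0 hc1 φ hφ, sigRep_reparam j ψ hψ, fun t ht => ?_⟩
  by_cases ht2 : t ≤ 1/2
  · have h2t : 2*t ∈ Set.Icc (0:ℝ) 1 := ⟨by linarith [ht.1], by linarith⟩
    have hφm : φ (2*t) ∈ Set.Icc (0:ℝ) 1 :=
      ⟨by rw [← hφ.2.2.1]; exact hφ.2.1 h2t.1, by rw [← hφ.2.2.2]; exact hφ.2.1 h2t.2⟩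
    have hψm : ψ (2*t) ∈ Set.Icc (0:ℝ) 1 :=
      ⟨by rw [← hψ.2.2.1]; exact hψ.2.1 h2t.1, by rw [← hψ.2.2.2]; exact hψ.2.1 h2t.2⟩
    have e1 : tauRep i c φ t
        = min (φ (2*t)) (((i:ℝ) + c*((φ (2*t))*((i:ℝ)+1) - i))/((i:ℝ)+1)) := by
      unfold tauRep thetaMap; rw [if_pos ht2]
    have e2 : sigRep j ψ t = ψ (2*t) * (j:ℝ)/((j:ℝ)+1) := by
      unfold sigRep; rw [if_pos ht2]
    rw [e1, e2, ← match_tau i v x c hc0 hc1 hxc' _ hφm,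
      show ψ (2*t) * (j:ℝ)/((j:ℝ)+1) = ψ (2*t) * (j:ℝ)/((j:ℝ)+1) from rfl,
      ← match_sigma j w y _ hψm]
    calc dist _ _ ≤ δ' := hbd (2*t) h2t
    _ ≤ δ + ε := by linarith
  · push_neg at ht2
    have hl : 2*t-1 ∈ Set.Icc (0:ℝ) 1 := ⟨by linarith, by linarith [ht.2]⟩
    have e1 : tauRep i c φ t = ((i:ℝ) + c + (1-c)*(2*t-1))/((i:ℝ)+1) := by
      unfold tauRep; rw [if_neg (by linarith)]
    have e2 : sigRep j ψ t = ((j:ℝ) + (2*t-1))/((j:ℝ)+1) := by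
      unfold sigRep; rw [if_neg (by linarith)]
    rw [e1, e2, seg_tau i v x c hc0 hc1 hxc' _ hl, seg_sigma j w y _ hl]
    calc dist ((1-(2*t-1)) • x + (2*t-1) • v (i+1)) ((1-(2*t-1)) • w j + (2*t-1) • y)
        ≤ (1-(2*t-1)) * dist x (w j) + (2*t-1) * dist (v (i+1)) y :=
          dist_combo _ _ _ _ _ hl.1 hl.2
    _ ≤ (1-(2*t-1)) * (δ+ε) + (2*t-1) * (δ+ε) := by
        have h1 : dist x (w j) ≤ δ + ε := by linarith
        have h2 : dist (v (i+1)) y ≤ δ + ε := by linarith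
        have := hl.1; have := hl.2
        gcongr <;> linarith
    _ = δ + ε := by ring

end Main
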